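/- arXiv:2604.15966 — 2 statements merged into one kernel-verified Lean document; each statement's English description precedes it below -/
import Mathlib

section
/- Let R be a commutative ring containing 1/2, and let A be a unital R-algebra equipped with a quadratic form q whose associated bilinear form is b (so b(x,y) = q(x+y) - q(x) - q(y)). Then q is multiplicative, i.e. q(xy) = q(x)q(y) for all x,y ∈ A, if and only if b satisfies b(x₁,x₂)·b(y₁,y₂) = b(x₁y₁, x₂y₂) + b(x₁y₂, x₂y₁) for all x₁,x₂,y₁,y₂ ∈ A. -/
/-- over a commutative ring with 1/2, for a unital (not necessarily
associative) algebra `A` with quadratic form `q` and polar form `b`,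
`q` is multiplicative iff `b` satisfies the composition identity. -/
theorem stmt_0 (R : Type*) [CommRing R] [Invertible (2 : R)]
    (A : Type*) [NonAssocRing A] [Module R A]
    [SMulCommClass R A A] [IsScalarTower R A A]
    (q : QuadraticForm R A) :
    (∀ x y : A, q (x * y) = q x * q y) ↔
      (∀ x₁ x₂ y₁ y₂ : A,
        QuadraticMap.polar (⇑q) x₁ x₂ * QuadraticMap.polar (⇑q) y₁ y₂ =
          QuadraticMap.polar (⇑q) (x₁ * y₁) (x₂ * y₂) +
            QuadraticMap.polar (⇑q) (x₁ * y₂) (x₂ * y₁)) := by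
  constructor
  · intro H x₁ x₂ y₁ y₂
    have hst : (x₁ + x₂) * (y₁ + y₂) = x₁ * y₁ + x₂ * y₂ + (x₁ * y₂ + x₂ * y₁) := by
      simp only [add_mul, mul_add]; abel
    have F1 : q (x₁ * y₁ + x₂ * y₂ + (x₁ * y₂ + x₂ * y₁)) = q (x₁ + x₂) * q (y₁ + y₂) := by
      rw [← hst]; exact H _ _
    have F2 : q (x₁ * y₁ + x₁ * y₂) = q x₁ * q (y₁ + y₂) := by
      rw [← mul_add]; exact H _ _
    have F3 : q (x₂ * y₂ + x₂ * y₁) = q x₂ * q (y₁ + y₂) := by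
      rw [add_comm, ← mul_add]; exact H _ _
    have F4 : q (x₁ * y₁ + x₂ * y₁) = q (x₁ + x₂) * q y₁ := by
      rw [← add_mul]; exact H _ _
    have F5 : q (x₂ * y₂ + x₁ * y₂) = q (x₁ + x₂) * q y₂ := by
      rw [add_comm, ← add_mul]; exact H _ _
    have hb : QuadraticMap.polar (⇑q) (x₁ * y₁ + x₂ * y₂) (x₁ * y₂ + x₂ * y₁) =
        QuadraticMap.polar (⇑q) (x₁ * y₁) (x₁ * y₂) +
          QuadraticMap.polar (⇑q) (x₁ * y₁) (x₂ * y₁) +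
          QuadraticMap.polar (⇑q) (x₂ * y₂) (x₁ * y₂) +
          QuadraticMap.polar (⇑q) (x₂ * y₂) (x₂ * y₁) := by
      rw [QuadraticMap.polar_add_left, QuadraticMap.polar_add_right,
        QuadraticMap.polar_add_right]
      ring
    simp only [QuadraticMap.polar] at hb ⊢
    linear_combination hb - F1 + F2 + F3 + F4 + F5 - H x₁ y₁ - H x₁ y₂ - H x₂ y₁ - H x₂ y₂
  · intro H x y
    have h := H x x y y
    rw [QuadraticMap.polar_self, QuadraticMap.polar_self, QuadraticMap.polar_self] at h
    have h' : (2 : R) * ((2 : R) * q (x * y)) = (2 : R) * ((2 : R) * (q x * q y)) := by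
      simp only [two_smul] at h
      linear_combination -h
    exact (mul_right_inj_of_invertible (2:R)).mp ((mul_right_inj_of_invertible (2:R)).mp h')
end

section
/- Let V = ℝ ⊕ W where W is a 7-dimensional real inner product space with inner product g and a cross product × satisfying g(α×β, γ) totally antisymmetric and α×β orthogonal to α and β with |α×β|² = |α|²|β|² - g(α,β)² (a vector cross product). Define on V the product (a,α)·(b,β) := (ab - g(α,β), aβ + bα + α×β) and the quadratic form q(a,α) := a² + g(α,α). Then q is multiplicative: q(X·Y) = q(X)q(Y) for all X, Y ∈ V, so V is a composition algebra of dimension 8. -/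
/-! The product's scalar part contributes `(ab - ⟪α, β⟫)²`; its vector part splits orthogonally into
`aβ + bα` and `α × β`, the latter having squared norm `|α|²|β|² - ⟪α, β⟫²`. The cross terms
`± 2ab⟪α, β⟫` cancel and the `⟪α, β⟫²` terms cancel, leaving `(a² + |α|²)(b² + |β|²)`. -/

lemma real_inner_self_smul_add_smul_add_of_orthogonal {W : Type*} [NormedAddCommGroup W]
    [InnerProductSpace ℝ W] (a b : ℝ) {α β γ : W}
    (hα : (inner ℝ γ α : ℝ) = 0) (hβ : (inner ℝ γ β : ℝ) = 0) :
    (inner ℝ (a • β + b • α + γ) (a • β + b • α + γ) : ℝ) =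
      a ^ 2 * inner ℝ β β + 2 * a * b * inner ℝ α β + b ^ 2 * inner ℝ α α + inner ℝ γ γ := by
  have hα' : (inner ℝ α γ : ℝ) = 0 := by rw [real_inner_comm]; exact hα
  have hβ' : (inner ℝ β γ : ℝ) = 0 := by rw [real_inner_comm]; exact hβ
  simp only [inner_add_left, inner_add_right, real_inner_smul_left, real_inner_smul_right,
    hα, hβ, hα', hβ', real_inner_comm β α]
  ring

theorem stmt_14_general (W : Type*) [NormedAddCommGroup W] [InnerProductSpace ℝ W]
    (cross : W →ₗ[ℝ] W →ₗ[ℝ] W)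
    (h1 : ∀ α β : W, (inner ℝ (cross α β) α : ℝ) = 0)
    (h2 : ∀ α β : W, (inner ℝ (cross α β) β : ℝ) = 0)
    (h4 : ∀ α β : W, (inner ℝ (cross α β) (cross α β) : ℝ) =
        (inner ℝ α α : ℝ) * (inner ℝ β β : ℝ) - (inner ℝ α β : ℝ) ^ 2) :
    ∀ (a b : ℝ) (α β : W),
      (a * b - (inner ℝ α β : ℝ)) ^ 2 +
          (inner ℝ (a • β + b • α + cross α β) (a • β + b • α + cross α β) : ℝ) =
        (a ^ 2 + (inner ℝ α α : ℝ)) * (b ^ 2 + (inner ℝ β β : ℝ)) := by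
  intro a b α β
  rw [real_inner_self_smul_add_smul_add_of_orthogonal a b (h1 α β) (h2 α β), h4]
  ring

/-- if a 7-dimensional real inner product space `W` carries a
vector cross product, then `V = ℝ ⊕ W` with product
`(a,α)·(b,β) = (ab - g(α,β), aβ + bα + α×β)` and quadratic form
`q(a,α) = a² + g(α,α)` satisfies `q(X·Y) = q(X)q(Y)`. -/
theorem stmt_14 (W : Type*) [NormedAddCommGroup W] [InnerProductSpace ℝ W]
    (hdim : Module.finrank ℝ W = 7)
    (cross : W →ₗ[ℝ] W →ₗ[ℝ] W)
    (h1 : ∀ α β : W, (inner ℝ (cross α β) α : ℝ) = 0)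
    (h2 : ∀ α β : W, (inner ℝ (cross α β) β : ℝ) = 0)
    (h3 : ∀ α β γ : W, (inner ℝ (cross α β) γ : ℝ) = -(inner ℝ (cross β α) γ : ℝ))
    (h4 : ∀ α β : W, (inner ℝ (cross α β) (cross α β) : ℝ) =
        (inner ℝ α α : ℝ) * (inner ℝ β β : ℝ) - (inner ℝ α β : ℝ) ^ 2) :
    ∀ (a b : ℝ) (α β : W),
      (a * b - (inner ℝ α β : ℝ)) ^ 2 +
          (inner ℝ (a • β + b • α + cross α β) (a • β + b • α + cross α β) : ℝ) =
        (a ^ 2 + (inner ℝ α α : ℝ)) * (b ^ 2 + (inner ℝ β β : ℝ)) :=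
  stmt_14_general W cross h1 h2 h4
end
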